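/- Let Re(α) > 0, Re(β) > 0, Re(γ) > 0 and a ∈ ℝ. Then the Riemann-Liouville fractional integral of order α based at 0 satisfies, for t > 0, I^α_{0,t} ( t^{γ−1} E_{β,γ}(a t^β) ) = t^{α+γ−1} E_{β,α+γ}(a t^β). -/

import Mathlib

open Filter Finset Topology MeasureTheory intervalIntegral Set

/-- The two-parameter Mittag-Leffler function `E_{α,β}(z) = ∑_{k=0}^∞ z^k / Γ(αk + β)`. -/
noncomputable def mittagLeffler (α β z : ℂ) : ℂ :=
  ∑' k : ℕ, z ^ k / Complex.Gamma (α * k + β)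

/-- The Riemann-Liouville fractional integral of order `α` based at `a`:
`I^α_{a,x} f(x) = (1/Γ(α)) ∫_a^x f(s) (x−s)^{α−1} ds`. -/
noncomputable def rlIntegral (a : ℝ) (α : ℂ) (f : ℝ → ℂ) (x : ℝ) : ℂ :=
  (1 / Complex.Gamma α) * ∫ s in a..x, f s * ((x - s : ℝ) : ℂ) ^ (α - 1)




lemma sum_inv_sq_le {x : ℝ} (hx : 0 < x) (n : ℕ) :
    ∑ j ∈ Finset.range (n + 1), ((x + j) ^ 2)⁻¹ ≤ x⁻¹ ^ 2 + x⁻¹ := by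
  have key : ∀ n : ℕ, ∑ j ∈ Finset.range (n + 1), ((x + j) ^ 2)⁻¹
      ≤ x⁻¹ ^ 2 + (x⁻¹ - (x + n)⁻¹) := by
    intro n
    induction n with
    | zero => simp [inv_pow]
    | succ n ih =>
      rw [Finset.sum_range_succ]
      have h1 : (0:ℝ) < x + n := by positivity
      have h2 : (0:ℝ) < x + (n + 1 : ℕ) := by positivity
      have h3 : ((x + ((n:ℕ)+1:ℕ)) ^ 2)⁻¹ ≤ (x + n)⁻¹ - (x + ((n:ℕ)+1:ℕ))⁻¹ := by
        push_cast
        have e : (x+(n:ℝ))⁻¹ - (x+(n:ℝ)+1)⁻¹ = ((x+(n:ℝ))*(x+(n:ℝ)+1))⁻¹ := by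
          field_simp
          ring
        rw [show x + ((n:ℝ) + 1) = x + (n:ℝ) + 1 by ring, e]
        apply inv_anti₀ (by positivity)
        nlinarith
      have := add_le_add ih h3
      push_cast at *
      linarith
  refine (key n).trans ?_
  have : (0:ℝ) < x + n := by positivity
  have : (0:ℝ) ≤ (x + n)⁻¹ := by positivity
  linarith

lemma abs_Gamma_lower {z : ℂ} (hz : 0 < z.re) :
    Real.Gamma z.re * Real.exp (-(z.im ^ 2 * (z.re⁻¹ ^ 2 + z.re⁻¹)) / 2)
      ≤ ‖Complex.Gamma z‖ := by
  set x := z.re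
  set y := z.im
  set B : ℝ := Real.exp (-(y ^ 2 * (x⁻¹ ^ 2 + x⁻¹)) / 2)
  have hB : 0 < B := Real.exp_pos _
  have key : ∀ n : ℕ, Real.GammaSeq x n * B ≤ ‖Complex.GammaSeq z n‖ := by
    intro n
    rcases Nat.eq_zero_or_pos n with rfl | hn
    · simp [Real.GammaSeq, Real.zero_rpow hz.ne']
    have hP : (0:ℝ) < ∏ j ∈ Finset.range (n + 1), (x + j) := by
      apply Finset.prod_pos; intro j _; positivity
    have hQ : (0:ℝ) < ∏ j ∈ Finset.range (n + 1), ‖z + j‖ := by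
      apply Finset.prod_pos; intro j _
      have : x + j ≤ ‖z + j‖ := by
        have := Complex.re_le_norm (z + j)
        simpa using this
      nlinarith [hP]
    set P := ∏ j ∈ Finset.range (n + 1), (x + j) with hPdef
    set Q := ∏ j ∈ Finset.range (n + 1), ‖z + j‖ with hQdef
    set E : ℝ := Real.exp (y ^ 2 * (x⁻¹ ^ 2 + x⁻¹) / 2) with hEdef
    have hE : 0 < E := Real.exp_pos _
    have hBE : B = E⁻¹ := by
      show Real.exp (-(y ^ 2 * (x⁻¹ ^ 2 + x⁻¹)) / 2) = E⁻¹
      rw [hEdef, ← Real.exp_neg]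
      congr 1
      ring
    have habs : ‖Complex.GammaSeq z n‖ = (n:ℝ) ^ x * n.factorial / Q := by
      rw [Complex.GammaSeq, norm_div, norm_mul, norm_prod,
        Complex.norm_natCast, ← Complex.ofReal_natCast n,
        Complex.norm_cpow_eq_rpow_re_of_pos (by exact_mod_cast hn)]
    have hQ2 : Q ^ 2 ≤ (P * E) ^ 2 := by
      have step1 : Q ^ 2 = ∏ j ∈ Finset.range (n + 1), ((x + j) ^ 2 + y ^ 2) := by
        rw [hQdef, ← Finset.prod_pow]
        refine Finset.prod_congr rfl fun j _ => ?_
        rw [Complex.sq_norm, Complex.normSq_apply]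
        simp [x, y]
        ring
      have step2 : ∀ j ∈ Finset.range (n + 1),
          (x + (j:ℝ)) ^ 2 + y ^ 2 ≤ (x + j) ^ 2 * Real.exp (y ^ 2 * ((x + j) ^ 2)⁻¹) := by
        intro j _
        have hxj : (0:ℝ) < (x + j) ^ 2 := by positivity
        have := Real.add_one_le_exp (y ^ 2 * ((x + j) ^ 2)⁻¹)
        calc (x + (j:ℝ)) ^ 2 + y ^ 2 = (x + j) ^ 2 * (y ^ 2 * ((x + j) ^ 2)⁻¹ + 1) := by
              field_simp
              ring
          _ ≤ (x + j) ^ 2 * Real.exp (y ^ 2 * ((x + j) ^ 2)⁻¹) := by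
              apply mul_le_mul_of_nonneg_left this hxj.le
      have step3 : Q ^ 2 ≤ P ^ 2 * Real.exp (∑ j ∈ Finset.range (n + 1), y ^ 2 * ((x + j) ^ 2)⁻¹) := by
        rw [step1, Real.exp_sum, hPdef, ← Finset.prod_pow, ← Finset.prod_mul_distrib]
        refine Finset.prod_le_prod (fun j _ => by positivity) step2
      have step4 : ∑ j ∈ Finset.range (n + 1), y ^ 2 * ((x + j) ^ 2)⁻¹ ≤ y ^ 2 * (x⁻¹ ^ 2 + x⁻¹) := by
        rw [← Finset.mul_sum]
        exact mul_le_mul_of_nonneg_left (sum_inv_sq_le hz n) (sq_nonneg y)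
      calc Q ^ 2 ≤ P ^ 2 * Real.exp (∑ j ∈ Finset.range (n + 1), y ^ 2 * ((x + j) ^ 2)⁻¹) := step3
        _ ≤ P ^ 2 * Real.exp (y ^ 2 * (x⁻¹ ^ 2 + x⁻¹)) := by
            apply mul_le_mul_of_nonneg_left (Real.exp_le_exp.2 step4) (by positivity)
        _ = (P * E) ^ 2 := by
            rw [mul_pow]
            congr 1
            rw [hEdef, ← Real.exp_nat_mul]
            congr 1
            push_cast
            ring
      done
    have hQP : Q ≤ P * E := by
      have := (pow_le_pow_iff_left₀ hQ.le (by positivity) (two_ne_zero)).1 hQ2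
      exact this
    rw [habs, Real.GammaSeq, hBE]
    rw [div_mul_eq_mul_div, div_le_div_iff₀ (by positivity) hQ]
    calc (n:ℝ) ^ x * n.factorial * E⁻¹ * Q ≤ (n:ℝ) ^ x * n.factorial * E⁻¹ * (P * E) := by
          apply mul_le_mul_of_nonneg_left hQP (by positivity)
      _ = (n:ℝ) ^ x * n.factorial * P := by
          field_simp
  have h1 : Tendsto (fun n => Real.GammaSeq x n * B) atTop (𝓝 (Real.Gamma x * B)) :=
    (Real.GammaSeq_tendsto_Gamma x).mul_const B
  have h2 : Tendsto (fun n => ‖Complex.GammaSeq z n‖) atTop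
      (𝓝 ‖Complex.Gamma z‖) :=
    (continuous_norm.tendsto _).comp (Complex.GammaSeq_tendsto_Gamma z)
  exact le_of_tendsto_of_tendsto' h1 h2 key




lemma summable_pow_div_Gamma {b c : ℝ} (hb : 0 < b) (hc : 0 < c) {P : ℝ} (hP : 0 ≤ P) :
    Summable (fun k : ℕ => P ^ k / Real.Gamma (b * k + c)) := by
  set Q : ℝ := max 1 (2 * P) with hQdef
  have hQ1 : (1:ℝ) ≤ Q := le_max_left _ _
  set D : ℕ := ⌈2 / b⌉₊ + 1 with hDdef
  set R : ℝ := Q ^ D with hRdef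
  have hR1 : (1:ℝ) ≤ R := one_le_pow₀ hQ1
  set N : ℕ → ℕ := fun k => ⌊b * k + c⌋₊ - 1 with hNdef
  have harg : Tendsto (fun k : ℕ => b * k + c) atTop atTop :=
    tendsto_atTop_add_const_right _ c (tendsto_natCast_atTop_atTop.const_mul_atTop hb)
  have hNtend : Tendsto N atTop atTop :=
    (tendsto_sub_atTop_nat 1).comp (tendsto_nat_floor_atTop.comp harg)
  -- eventually, R ^ n / n ! < 1
  have hfact : ∀ᶠ n : ℕ in atTop, R ^ n / n.factorial < 1 :=
    (FloorSemiring.tendsto_pow_div_factorial_atTop R).eventually (gt_mem_nhds one_pos)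
  have hev : ∀ᶠ k : ℕ in atTop, P ^ k / Real.Gamma (b * k + c) ≤ (1/2) ^ k := by
    filter_upwards [hNtend.eventually hfact, harg.eventually_ge_atTop 4,
      harg.eventually_ge_atTop (c + 4)] with k hk1 hk4 hbk4
    have hbk : (4:ℝ) ≤ b * k := by linarith
    set m : ℕ := ⌊b * k + c⌋₊ with hmdef
    have hx0 : (0:ℝ) ≤ b * k + c := by linarith
    have hmle : (m:ℝ) ≤ b * k + c := Nat.floor_le hx0
    have hmgt : b * k + c < m + 1 := Nat.lt_floor_add_one _
    have hm4 : 4 ≤ m := Nat.le_floor (by exact_mod_cast hk4)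
    have hmN : m = N k + 1 := by
      simp only [hNdef]
      omega
    have hNk : (N k : ℝ) ≥ b * k + c - 2 := by
      have : (m:ℝ) = N k + 1 := by exact_mod_cast hmN
      linarith
    -- Γ(b k + c) ≥ (N k)!
    have hGammaPos : 0 < Real.Gamma (b * k + c) := Real.Gamma_pos_of_pos (by linarith)
    have hGmono : (N k).factorial ≤ Real.Gamma (b * k + c) := by
      have h2m : (2:ℝ) ≤ (m:ℝ) := by exact_mod_cast (by omega : 2 ≤ m)
      have hmem1 : (m:ℝ) ∈ Set.Ici (2:ℝ) := h2m
      have hmem2 : b * k + c ∈ Set.Ici (2:ℝ) := by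
        simp only [Set.mem_Ici]; linarith
      have := (Real.Gamma_strictMonoOn_Ici.monotoneOn) hmem1 hmem2 hmle
      have heq : Real.Gamma (m:ℝ) = (N k).factorial := by
        rw [hmN]
        push_cast
        exact Real.Gamma_nat_eq_factorial (N k)
      linarith
    -- Q ^ k ≤ R ^ (N k)
    have hkN : k ≤ D * N k := by
      have h2b : (2 / b : ℝ) ≤ D := by
        calc (2/b : ℝ) ≤ ⌈2/b⌉₊ := Nat.le_ceil _
          _ ≤ D := by exact_mod_cast (by omega : ⌈2/b⌉₊ ≤ D)
      have hNhalf : (k:ℝ) ≤ (2 / b) * N k := by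
        rw [div_mul_eq_mul_div, le_div_iff₀ hb]
        nlinarith
      have : (k:ℝ) ≤ (D:ℝ) * N k := by
        calc (k:ℝ) ≤ (2/b) * N k := hNhalf
          _ ≤ (D:ℝ) * N k := by
              apply mul_le_mul_of_nonneg_right h2b (by positivity)
      exact_mod_cast this
    have hQR : Q ^ k ≤ R ^ N k := by
      calc Q ^ k ≤ Q ^ (D * N k) := pow_le_pow_right₀ hQ1 hkN
        _ = R ^ N k := by rw [hRdef, ← pow_mul, mul_comm]
    -- (2P)^k ≤ Γ
    have h2P : (2 * P) ^ k ≤ Real.Gamma (b * k + c) := by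
      have hfac : R ^ N k ≤ (N k).factorial := by
        have hfp : (0:ℝ) < (N k).factorial := by positivity
        rw [div_lt_one hfp] at hk1
        linarith
      calc (2*P) ^ k ≤ Q ^ k := pow_le_pow_left₀ (by positivity) (le_max_right _ _) k
        _ ≤ R ^ N k := hQR
        _ ≤ (N k).factorial := hfac
        _ ≤ Real.Gamma (b * k + c) := hGmono
    have hPk : P ^ k = (1/2) ^ k * (2 * P) ^ k := by
      rw [← mul_pow]
      congr 1
      ring
    rw [hPk, div_le_iff₀ hGammaPos]
    apply mul_le_mul_of_nonneg_left h2P (by positivity)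
  -- conclude summability
  obtain ⟨k0, hk0⟩ := eventually_atTop.1 hev
  rw [← summable_nat_add_iff k0]
  apply Summable.of_nonneg_of_le (fun n => by positivity) (fun n => hk0 (n + k0) (by omega))
  have hgeo : Summable (fun n : ℕ => (1/2:ℝ) ^ n * (1/2) ^ k0) :=
    (summable_geometric_of_lt_one (by norm_num) (by norm_num)).mul_right _
  exact hgeo.congr (fun n => by rw [← pow_add])




lemma betaIntegrable {u v : ℂ} (hu : 0 < u.re) (hv : 0 < v.re) {t : ℝ} (ht : 0 < t) :
    IntervalIntegrable (fun s : ℝ => (s : ℂ) ^ (u - 1) * (((t - s : ℝ) : ℂ)) ^ (v - 1))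
      volume 0 t := by
  have hG := Complex.betaIntegral_convergent hu hv
  have h2 := hG.comp_mul_left (c := t⁻¹)
  rw [zero_div, one_div, inv_inv] at h2
  have h3 := h2.const_mul ((t:ℂ) ^ (u - 1) * (t:ℂ) ^ (v - 1))
  rw [intervalIntegrable_iff_integrableOn_Ioc_of_le ht.le] at h3 ⊢
  refine h3.congr_fun (fun x hx => ?_) measurableSet_Ioc
  have hx0 : 0 ≤ x := hx.1.le
  have hxt : x ≤ t := hx.2
  have htC : (t:ℂ) ≠ 0 := Complex.ofReal_ne_zero.mpr ht.ne'
  have e1 : (x:ℂ) ^ (u - 1) = (t:ℂ) ^ (u - 1) * ((t⁻¹ * x : ℝ):ℂ) ^ (u - 1) := by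
    rw [← Complex.mul_cpow_ofReal_nonneg ht.le (by positivity)]
    congr 2
    push_cast
    field_simp
  have e2 : ((t - x : ℝ):ℂ) ^ (v - 1) = (t:ℂ) ^ (v - 1) * (1 - ((t⁻¹ * x : ℝ):ℂ)) ^ (v - 1) := by
    have : (1 : ℂ) - ((t⁻¹ * x : ℝ):ℂ) = (((1 - t⁻¹ * x : ℝ)):ℂ) := by push_cast; ring
    rw [this, ← Complex.mul_cpow_ofReal_nonneg ht.le]
    · congr 2
      push_cast
      field_simp
    · have : t⁻¹ * x ≤ 1 := by rw [inv_mul_le_iff₀ ht]; linarith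
      linarith
  rw [e1, e2]
  ring

lemma real_beta {p q : ℝ} (hp : 0 < p) (hq : 0 < q) {t : ℝ} (ht : 0 < t) :
    ∫ s in (0:ℝ)..t, s ^ (p - 1) * (t - s) ^ (q - 1) =
      t ^ (p + q - 1) * (Real.Gamma p * Real.Gamma q / Real.Gamma (p + q)) := by
  have hbeta := Complex.betaIntegral_scaled (p:ℂ) (q:ℂ) ht
  have hcongr : ∫ x in (0:ℝ)..t, (x:ℂ) ^ ((p:ℂ) - 1) * ((t:ℂ) - x) ^ ((q:ℂ) - 1)
      = ∫ x in (0:ℝ)..t, (((x ^ (p-1) * (t - x) ^ (q-1) : ℝ)):ℂ) := by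
    refine intervalIntegral.integral_congr (fun x hx => ?_)
    rw [Set.uIcc_of_le ht.le] at hx
    have h1 : (x:ℂ) ^ ((p:ℂ) - 1) = ((x ^ (p-1) : ℝ) : ℂ) := by
      rw [Complex.ofReal_cpow hx.1]
      norm_cast
    have h2 : ((t:ℂ) - x) ^ ((q:ℂ) - 1) = (((t - x) ^ (q-1) : ℝ) : ℂ) := by
      rw [Complex.ofReal_cpow (by linarith [hx.2] : (0:ℝ) ≤ t - x)]
      norm_cast
    rw [h1, h2]
    push_cast
    ring
  rw [hcongr, intervalIntegral.integral_ofReal] at hbeta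
  have hΓ : Complex.Gamma ((p:ℂ) + q) ≠ 0 := by
    apply Complex.Gamma_ne_zero_of_re_pos
    simp [Complex.add_re]
    positivity
  have hΓ' : ((Real.Gamma (p + q) : ℝ) : ℂ) ≠ 0 := by
    rw [← Complex.Gamma_ofReal]
    push_cast
    exact hΓ
  have hbetaval : Complex.betaIntegral p q
      = ((Real.Gamma p * Real.Gamma q / Real.Gamma (p + q) : ℝ) : ℂ) := by
    have hmul := Complex.Gamma_mul_Gamma_eq_betaIntegral
      (by simpa using hp : 0 < Complex.re (p:ℂ)) (by simpa using hq : 0 < Complex.re (q:ℂ))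
    rw [show ((p:ℂ) + q) = ((p + q : ℝ) : ℂ) by push_cast; ring] at hmul
    rw [Complex.Gamma_ofReal, Complex.Gamma_ofReal, Complex.Gamma_ofReal] at hmul
    rw [Complex.ofReal_div, Complex.ofReal_mul, eq_div_iff hΓ']
    linear_combination -hmul
  have htpow : (t:ℂ) ^ ((p:ℂ) + q - 1) = ((t ^ (p + q - 1) : ℝ) : ℂ) := by
    rw [Complex.ofReal_cpow ht.le]
    norm_cast
  rw [htpow, hbetaval, ← Complex.ofReal_mul] at hbeta
  exact_mod_cast hbeta

set_option maxHeartbeats 1000000 in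
/-- For `Re(α) > 0`, `Re(β) > 0`, `Re(γ) > 0`, `a ∈ ℝ` and `t > 0`:
`I^α_{0,t} ( t^{γ−1} E_{β,γ}(a t^β) ) = t^{α+γ−1} E_{β,α+γ}(a t^β)`. -/
theorem rlIntegral_mittagLeffler (α β γ : ℂ) (hα : 0 < α.re) (hβ : 0 < β.re) (hγ : 0 < γ.re)
    (a : ℝ) (t : ℝ) (ht : 0 < t) :
    rlIntegral 0 α (fun s : ℝ => (s : ℂ) ^ (γ - 1) * mittagLeffler β γ ((a : ℂ) * (s : ℂ) ^ β)) t
      = (t : ℂ) ^ (α + γ - 1) * mittagLeffler β (α + γ) ((a : ℂ) * (t : ℂ) ^ β) := by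
  have htC : (t:ℂ) ≠ 0 := Complex.ofReal_ne_zero.mpr ht.ne'
  have hΓα : Complex.Gamma α ≠ 0 := Complex.Gamma_ne_zero_of_re_pos hα
  set u : ℕ → ℂ := fun k => β * k + γ with hu
  have hure : ∀ k : ℕ, (u k).re = β.re * k + γ.re := by
    intro k
    simp [hu, Complex.add_re, Complex.mul_re]
  have huim : ∀ k : ℕ, (u k).im = β.im * k + γ.im := by
    intro k
    simp [hu, Complex.add_im, Complex.mul_im]
  have hupos : ∀ k : ℕ, 0 < (u k).re := by
    intro k
    rw [hure]
    positivity
  have hΓu : ∀ k, Complex.Gamma (u k) ≠ 0 := fun k => Complex.Gamma_ne_zero_of_re_pos (hupos k)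
  set c : ℕ → ℂ := fun k => (a:ℂ) ^ k / Complex.Gamma (u k) with hc
  set g : ℕ → ℝ → ℂ := fun k s => c k * ((s:ℂ) ^ (u k - 1) * ((t - s : ℝ):ℂ) ^ (α - 1)) with hg
  -- integrability of each term
  have hIg : ∀ k, IntegrableOn (g k) (Ioc 0 t) volume := by
    intro k
    exact ((betaIntegrable (hupos k) hα ht).1).const_mul (c k)
  -- pointwise expansion of the integrand as a tsum
  have hpt : ∀ s ∈ Ioc (0:ℝ) t,
      ((s : ℂ) ^ (γ - 1) * mittagLeffler β γ ((a : ℂ) * (s : ℂ) ^ β)) * ((t - s : ℝ):ℂ) ^ (α - 1)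
        = ∑' k : ℕ, g k s := by
    intro s hs
    have hs0 : (0:ℝ) < s := hs.1
    have hsC : (s:ℂ) ≠ 0 := Complex.ofReal_ne_zero.mpr hs0.ne'
    rw [mittagLeffler, ← tsum_mul_left, ← tsum_mul_right]
    refine tsum_congr fun k => ?_
    have e2 : ((a:ℂ) * (s:ℂ) ^ β) ^ k = (a:ℂ) ^ k * (s:ℂ) ^ (β * (k:ℂ)) := by
      rw [mul_pow, mul_comm β, Complex.cpow_nat_mul]
    have e : (s:ℂ) ^ (u k - 1) = (s:ℂ) ^ (γ - 1) * (s:ℂ) ^ (β * (k:ℂ)) := by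
      rw [← Complex.cpow_add _ _ hsC]
      congr 1
      rw [hu]
      ring
    show (s:ℂ) ^ (γ - 1) * (((a:ℂ) * (s:ℂ) ^ β) ^ k / Complex.Gamma (β * k + γ))
        * ((t - s : ℝ):ℂ) ^ (α - 1) = c k * ((s:ℂ) ^ (u k - 1) * ((t - s : ℝ):ℂ) ^ (α - 1))
    rw [e2, e]
    simp only [hc, hu]
    ring
  -- the exchange of integral and sum
  have hpk : ∀ k : ℕ, 0 < β.re * k + γ.re := fun k => by positivity
  have hVval : ∀ k : ℕ, ∫ s in (0:ℝ)..t, s ^ (β.re * k + γ.re - 1) * (t - s) ^ (α.re - 1)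
      = t ^ (β.re * k + γ.re + α.re - 1) *
        (Real.Gamma (β.re * k + γ.re) * Real.Gamma α.re / Real.Gamma (β.re * k + γ.re + α.re)) :=
    fun k => real_beta (hpk k) hα ht
  set V : ℕ → ℝ := fun k => ∫ s in (0:ℝ)..t, s ^ (β.re * k + γ.re - 1) * (t - s) ^ (α.re - 1)
    with hV
  have hVnonneg : ∀ k, 0 ≤ V k := by
    intro k
    simp only [hV]
    rw [hVval k]
    have := Real.Gamma_pos_of_pos (hpk k)
    have := Real.Gamma_pos_of_pos hα
    have h3 : (0:ℝ) < Real.Gamma (β.re * k + γ.re + α.re) := Real.Gamma_pos_of_pos (by positivity)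
    positivity
  -- value of the norm integral
  have hnorm : ∀ k : ℕ, ∫ s in Ioc (0:ℝ) t, ‖g k s‖ = ‖c k‖ * V k := by
    intro k
    rw [integral_Ioc_eq_integral_Ioo]
    have : ∀ s ∈ Ioo (0:ℝ) t, ‖g k s‖ = ‖c k‖ * (s ^ (β.re * k + γ.re - 1) * (t - s) ^ (α.re - 1)) := by
      intro s hs
      have hs0 : (0:ℝ) < s := hs.1
      have hts : (0:ℝ) < t - s := by linarith [hs.2]
      rw [hg]
      simp only [norm_mul]
      rw [Complex.norm_cpow_eq_rpow_re_of_pos hs0, Complex.norm_cpow_eq_rpow_re_of_pos hts]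
      rw [Complex.sub_re, Complex.one_re, hure, Complex.sub_re, Complex.one_re]
    rw [setIntegral_congr_fun measurableSet_Ioo this, MeasureTheory.integral_const_mul]
    congr 1
    simp only [hV]
    rw [intervalIntegral.integral_of_le ht.le, integral_Ioc_eq_integral_Ioo]
  -- summability of the norm integrals
  set M : ℝ := |β.im| + |γ.im| with hM
  set E1 : ℝ := Real.exp (M ^ 2 / (2 * β.re)) with hE1
  set E0 : ℝ := Real.exp (M ^ 2 / (2 * β.re ^ 2)) with hE0
  set W : ℝ := |a| * t ^ β.re * E1 with hW
  set K : ℝ := t ^ (γ.re + α.re - 1) * Real.Gamma α.re * E0 with hK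
  have hE1pos : 0 < E1 := Real.exp_pos _
  have hE0pos : 0 < E0 := Real.exp_pos _
  have hWnn : 0 ≤ W := by positivity
  have hWsum : Summable (fun k : ℕ => K * (W ^ k / Real.Gamma (β.re * k + (γ.re + α.re)))) :=
    (summable_pow_div_Gamma hβ (by positivity) hWnn).mul_left K
  have hbd : ∀ k : ℕ, 1 ≤ k →
      ‖c k‖ * V k ≤ K * (W ^ k / Real.Gamma (β.re * k + (γ.re + α.re))) := by
    intro k hk
    have hk1 : (1:ℝ) ≤ (k:ℝ) := by exact_mod_cast hk
    have hpk0 : 0 < β.re * k + γ.re := hpk k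
    have hΓpk : 0 < Real.Gamma (β.re * k + γ.re) := Real.Gamma_pos_of_pos hpk0
    have hΓq : 0 < Real.Gamma α.re := Real.Gamma_pos_of_pos hα
    have hΓpq : 0 < Real.Gamma (β.re * k + γ.re + α.re) :=
      Real.Gamma_pos_of_pos (by positivity)
    -- bound on the exponential correction
    have hEk : ((u k).im) ^ 2 * ((β.re * k + γ.re)⁻¹ ^ 2 + (β.re * k + γ.re)⁻¹) / 2
        ≤ M ^ 2 / (2 * β.re ^ 2) + (M ^ 2 / (2 * β.re)) * k := by
      have hbk : 0 < β.re * k := by positivity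
      have him : |(u k).im| ≤ M * k := by
        rw [huim k, hM]
        calc |β.im * k + γ.im| ≤ |β.im * k| + |γ.im| := abs_add_le _ _
          _ = |β.im| * k + |γ.im| := by rw [abs_mul, Nat.abs_cast]
          _ ≤ |β.im| * k + |γ.im| * k := by nlinarith [abs_nonneg γ.im]
          _ = (|β.im| + |γ.im|) * k := by ring
      have him2 : ((u k).im) ^ 2 ≤ (M * k) ^ 2 := by
        rw [← sq_abs ((u k).im)]
        apply pow_le_pow_left₀ (abs_nonneg _) him
      have hp1 : (β.re * k + γ.re)⁻¹ ≤ (β.re * k)⁻¹ := by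
        apply inv_anti₀ hbk
        linarith
      have hp2 : (β.re * k + γ.re)⁻¹ ^ 2 ≤ ((β.re * k)⁻¹) ^ 2 := by
        apply pow_le_pow_left₀ (by positivity) hp1
      have hsum2 : (β.re * k + γ.re)⁻¹ ^ 2 + (β.re * k + γ.re)⁻¹
          ≤ ((β.re * k)⁻¹) ^ 2 + (β.re * k)⁻¹ := by linarith
      have hnng : (0:ℝ) ≤ (β.re * k + γ.re)⁻¹ ^ 2 + (β.re * k + γ.re)⁻¹ := by positivity
      calc ((u k).im) ^ 2 * ((β.re * k + γ.re)⁻¹ ^ 2 + (β.re * k + γ.re)⁻¹) / 2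
          ≤ (M * k) ^ 2 * (((β.re * k)⁻¹) ^ 2 + (β.re * k)⁻¹) / 2 := by
            have := mul_le_mul him2 hsum2 hnng (by positivity)
            linarith
        _ = M ^ 2 / (2 * β.re ^ 2) + (M ^ 2 / (2 * β.re)) * k := by
            field_simp
    -- bound on ‖c k‖
    have hAbsΓ := abs_Gamma_lower (hupos k)
    rw [hure k, huim k] at hAbsΓ
    have hAbsΓpos : 0 < ‖Complex.Gamma (u k)‖ := by
      rw [norm_pos_iff]
      exact hΓu k
    have hcabs : ‖c k‖ = |a| ^ k / ‖Complex.Gamma (u k)‖ := by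
      rw [hc]
      simp [map_div₀, map_pow]
    have hexp : Real.exp ((β.im * k + γ.im) ^ 2 *
          ((β.re * k + γ.re)⁻¹ ^ 2 + (β.re * k + γ.re)⁻¹) / 2) ≤ E0 * E1 ^ k := by
      rw [hE0, hE1, ← Real.exp_nat_mul, ← Real.exp_add]
      apply Real.exp_le_exp.2
      have := hEk
      rw [huim k] at this
      calc (β.im * k + γ.im) ^ 2 * ((β.re * k + γ.re)⁻¹ ^ 2 + (β.re * k + γ.re)⁻¹) / 2
          ≤ M ^ 2 / (2 * β.re ^ 2) + (M ^ 2 / (2 * β.re)) * k := this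
        _ = M ^ 2 / (2 * β.re ^ 2) + k * (M ^ 2 / (2 * β.re)) := by ring
    have hcb : ‖c k‖ ≤ |a| ^ k * (E0 * E1 ^ k) / Real.Gamma (β.re * k + γ.re) := by
      rw [hcabs]
      rw [div_le_div_iff₀ hAbsΓpos hΓpk]
      calc |a| ^ k * Real.Gamma (β.re * k + γ.re)
          = (|a| ^ k * Real.exp ((β.im * k + γ.im) ^ 2 *
              ((β.re * k + γ.re)⁻¹ ^ 2 + (β.re * k + γ.re)⁻¹) / 2)) *
            (Real.Gamma (β.re * k + γ.re) *
              Real.exp (-((β.im * k + γ.im) ^ 2 *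
                ((β.re * k + γ.re)⁻¹ ^ 2 + (β.re * k + γ.re)⁻¹)) / 2)) := by
            rw [mul_mul_mul_comm, ← Real.exp_add,
              show (β.im * ↑k + γ.im) ^ 2 * ((β.re * ↑k + γ.re)⁻¹ ^ 2 + (β.re * ↑k + γ.re)⁻¹) / 2
                + -((β.im * ↑k + γ.im) ^ 2 * ((β.re * ↑k + γ.re)⁻¹ ^ 2 + (β.re * ↑k + γ.re)⁻¹)) / 2
                = 0 by ring, Real.exp_zero, mul_one]
        _ ≤ (|a| ^ k * (E0 * E1 ^ k)) * ‖Complex.Gamma (u k)‖ := by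
            apply mul_le_mul ?_ hAbsΓ
              (mul_nonneg hΓpk.le (Real.exp_nonneg _)) (by positivity)
            exact mul_le_mul_of_nonneg_left hexp (by positivity)
    -- put everything together
    have hVk : V k = (t ^ β.re) ^ k * t ^ (γ.re + α.re - 1) *
        (Real.Gamma (β.re * k + γ.re) * Real.Gamma α.re / Real.Gamma (β.re * k + γ.re + α.re)) := by
      simp only [hV]
      rw [hVval k]
      congr 1
      rw [show β.re * k + γ.re + α.re - 1 = β.re * k + (γ.re + α.re - 1) by ring,
        Real.rpow_add ht, Real.rpow_mul ht.le, Real.rpow_natCast]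
    calc ‖c k‖ * V k ≤ (|a| ^ k * (E0 * E1 ^ k) / Real.Gamma (β.re * k + γ.re)) * V k :=
          mul_le_mul_of_nonneg_right hcb (hVnonneg k)
      _ = K * (W ^ k / Real.Gamma (β.re * k + (γ.re + α.re))) := by
          rw [hVk, hW, hK]
          rw [show β.re * ↑k + (γ.re + α.re) = β.re * ↑k + γ.re + α.re by ring]
          field_simp
          ring
  have hsumNorm : Summable (fun k : ℕ => ‖c k‖ * V k) := by
    rw [← summable_nat_add_iff 1]
    apply Summable.of_nonneg_of_le
      (fun n => mul_nonneg (norm_nonneg _) (hVnonneg _))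
      (fun n => hbd (n + 1) (by omega))
    exact (summable_nat_add_iff 1).2 hWsum
  -- exchange integral and sum
  have hexch : (∫ s in Ioc (0:ℝ) t,
        ((s : ℂ) ^ (γ - 1) * mittagLeffler β γ ((a : ℂ) * (s : ℂ) ^ β)) * ((t - s : ℝ):ℂ) ^ (α - 1))
      = ∑' k : ℕ, ∫ s in Ioc (0:ℝ) t, g k s := by
    rw [setIntegral_congr_fun measurableSet_Ioc hpt]
    refine integral_tsum (fun k => (hIg k).aestronglyMeasurable) ?_
    have heq : ∀ k : ℕ, ∫⁻ s in Ioc (0:ℝ) t, ‖g k s‖ₑ ∂volume = ENNReal.ofReal (‖c k‖ * V k) := by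
      intro k
      rw [← ofReal_integral_norm_eq_lintegral_enorm (hIg k), hnorm k]
    rw [tsum_congr heq, ← ENNReal.ofReal_tsum_of_nonneg
      (fun k => mul_nonneg (norm_nonneg _) (hVnonneg k)) hsumNorm]
    exact ENNReal.ofReal_ne_top
  -- value of each integral
  have hIntVal : ∀ k : ℕ, (∫ s in Ioc (0:ℝ) t, g k s)
      = c k * ((t:ℂ) ^ (u k + α - 1) * Complex.betaIntegral (u k) α) := by
    intro k
    rw [← intervalIntegral.integral_of_le ht.le]
    have hfun : (fun s : ℝ => g k s)
        = fun s : ℝ => c k * ((s:ℂ) ^ (u k - 1) * ((t:ℂ) - (s:ℂ)) ^ (α - 1)) := by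
      funext s
      rw [hg]
      norm_cast
    rw [hfun, intervalIntegral.integral_const_mul, Complex.betaIntegral_scaled (u k) α ht]
  -- final computation
  rw [rlIntegral, intervalIntegral.integral_of_le ht.le, hexch, tsum_congr hIntVal,
    mittagLeffler, ← tsum_mul_left, ← tsum_mul_left]
  refine tsum_congr fun k => ?_
  have hαu : Complex.Gamma (u k + α) ≠ 0 := by
    apply Complex.Gamma_ne_zero_of_re_pos
    rw [Complex.add_re]
    have := hupos k
    positivity
  have hBval : Complex.betaIntegral (u k) α
      = Complex.Gamma (u k) * Complex.Gamma α / Complex.Gamma (u k + α) := by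
    have h := Complex.Gamma_mul_Gamma_eq_betaIntegral (hupos k) hα
    rw [eq_div_iff hαu]
    linear_combination -h
  have ht1 : (t:ℂ) ^ (u k + α - 1) = (t:ℂ) ^ (β * (k:ℂ)) * (t:ℂ) ^ (α + γ - 1) := by
    rw [← Complex.cpow_add _ _ htC]
    congr 1
    rw [hu]
    ring
  have ht2 : ((a:ℂ) * (t:ℂ) ^ β) ^ k = (a:ℂ) ^ k * (t:ℂ) ^ (β * (k:ℂ)) := by
    rw [mul_pow, mul_comm β, Complex.cpow_nat_mul]
  have hΓeq : Complex.Gamma (β * (k:ℂ) + (α + γ)) = Complex.Gamma (u k + α) := by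
    congr 1
    rw [hu]
    ring
  have h1 : Complex.Gamma (β * (k:ℂ) + γ) ≠ 0 := by simpa [hu] using hΓu k
  have h3 : Complex.Gamma (u k + α) ≠ 0 := hαu
  rw [hBval, ht1, ht2, hΓeq, hc]
  simp only [hu]
  field_simp
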